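/- For a binary erasure channel BEC(ε), the polarized channels are again (equivalent to) binary erasure channels with W^- ≅ BEC(2ε − ε²) and W^+ ≅ BEC(ε²). Consequently every bit-channel W^{(i)} of BEC(ε) is a BEC whose erasure probability is obtained by iterating the maps ε ↦ 2ε − ε² and ε ↦ ε². -/

import Mathlib

open Finset

/-- A discrete channel: nonnegative transition "probabilities" summing to one. -/
def IsChannel {X Y : Type} [Fintype Y] (W : X → Y → ℝ) : Prop :=
  (∀ x y, 0 ≤ W x y) ∧ ∀ x, ∑ y, W x y = 1

/-- `Wd` is (stochastically) degraded with respect to `W`. -/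
def Degraded {X Y Z : Type} [Fintype Y] [Fintype Z]
    (Wd : X → Z → ℝ) (W : X → Y → ℝ) : Prop :=
  ∃ P : Y → Z → ℝ, IsChannel P ∧ ∀ x z, Wd x z = ∑ y, P y z * W x y
/-- Arıkan's minus transform. -/
noncomputable def Wminus {Y : Type} (W : Fin 2 → Y → ℝ) : Fin 2 → Y × Y → ℝ :=
  fun u1 p => ∑ u2 : Fin 2, (1 / 2 : ℝ) * W (u1 + u2) p.1 * W u2 p.2

/-- Arıkan's plus transform. -/
noncomputable def Wplus {Y : Type} (W : Fin 2 → Y → ℝ) : Fin 2 → Y × Y × Fin 2 → ℝ :=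
  fun u2 p => (1 / 2 : ℝ) * W (p.2.2 + u2) p.1 * W u2 p.2.1
/-- Output alphabet of a polarized bit-channel indexed by a list of bits
(`true` = plus transform, `false` = minus transform). -/
def bitOut (Y : Type) : List Bool → Type
  | [] => Y
  | false :: bs => bitOut Y bs × bitOut Y bs
  | true :: bs => bitOut Y bs × bitOut Y bs × Fin 2

instance bitOutFintype (Y : Type) [inst : Fintype Y] : ∀ bs : List Bool, Fintype (bitOut Y bs)
  | [] => inst
  | false :: bs => letI := bitOutFintype Y bs
      inferInstanceAs (Fintype (bitOut Y bs × bitOut Y bs))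
  | true :: bs => letI := bitOutFintype Y bs
      inferInstanceAs (Fintype (bitOut Y bs × bitOut Y bs × Fin 2))

/-- The polarized bit-channel `W^{(i)}` where the binary expansion of `i - 1`
is the list of bits (`true` selecting the plus transform). -/
noncomputable def bitChannel {Y : Type} (W : Fin 2 → Y → ℝ) : (bs : List Bool) → Fin 2 → bitOut Y bs → ℝ
  | [] => W
  | false :: bs => Wminus (bitChannel W bs)
  | true :: bs => Wplus (bitChannel W bs)
/-- The binary erasure channel with erasure probability `ε`:
output `none` is the erasure symbol. -/
noncomputable def BEC (ε : ℝ) : Fin 2 → Option (Fin 2) → ℝ := fun x y =>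
  match y with
  | none => ε
  | some z => if z = x then 1 - ε else 0

/-- Channel equivalence: mutual degradation. -/
def ChEquiv {X Y Z : Type} [Fintype Y] [Fintype Z]
    (W : X → Y → ℝ) (V : X → Z → ℝ) : Prop :=
  Degraded W V ∧ Degraded V W

/-- The erasure probability of the bit-channel with bit-index `bs`, obtained by
iterating `x ↦ 2x − x²` (minus) and `x ↦ x²` (plus). -/
noncomputable def becIter (ε : ℝ) : List Bool → ℝ
  | [] => ε
  | false :: bs => 2 * becIter ε bs - (becIter ε bs) ^ 2
  | true :: bs => (becIter ε bs) ^ 2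

/-! A BEC output either reveals its input or is an erasure, and given the pattern of erasures the
probability of the actual output does not depend on the input. So the map sending an output of
`W⁻` or `W⁺` to the decoded bit (or to an erasure) is a sufficient statistic: pushing forward along
it gives a BEC, and resampling from the input-independent posterior recovers the original channel.
Both transforms preserve degradation (apply the degrading kernel to each coordinate), hence
equivalence, and the bit-channel statement follows by induction on the bit list. -/

section Kernels

variable {X Y Z S T : Type} [Fintype Y] [Fintype Z]

def detKernel [DecidableEq Z] (f : Y → Z) : Y → Z → ℝ := fun y z => if f y = z then 1 else 0

omit [Fintype Y] in
theorem isChannel_detKernel [DecidableEq Z] (f : Y → Z) : IsChannel (detKernel f) :=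
  ⟨fun y z => by unfold detKernel; split_ifs <;> norm_num, fun y => by simp [detKernel]⟩

omit [Fintype Y] in
theorem IsChannel.prod [Fintype T] {P : Y → Z → ℝ} {Q : S → T → ℝ} (hP : IsChannel P)
    (hQ : IsChannel Q) : IsChannel (fun (y : Y × S) (z : Z × T) => P y.1 z.1 * Q y.2 z.2) :=
  ⟨fun y z => mul_nonneg (hP.1 _ _) (hQ.1 _ _), fun y => by
    rw [Fintype.sum_prod_type, ← Finset.sum_mul_sum, hP.2, hQ.2, one_mul]⟩

theorem Degraded.refl (W : X → Y → ℝ) : Degraded W W := by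
  classical
  exact ⟨detKernel id, isChannel_detKernel id, fun x z => by simp [detKernel]⟩

theorem ChEquiv.refl (W : X → Y → ℝ) : ChEquiv W W :=
  ⟨.refl W, .refl W⟩

theorem Degraded.trans [Fintype T] {W : X → Z → ℝ} {V : X → T → ℝ} {U : X → Y → ℝ}
    (hWV : Degraded W V) (hVU : Degraded V U) : Degraded W U := by
  obtain ⟨P, hP, hWP⟩ := hWV
  obtain ⟨Q, hQ, hVQ⟩ := hVU
  refine ⟨fun y z => ∑ t, Q y t * P t z,
    ⟨fun y z => Finset.sum_nonneg fun t _ => mul_nonneg (hQ.1 y t) (hP.1 t z), fun y => ?_⟩,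
    fun x z => ?_⟩
  · simp_rw [Finset.sum_comm (γ := Z), ← Finset.mul_sum, hP.2, mul_one, hQ.2]
  · simp_rw [hWP x z, hVQ, Finset.sum_mul, Finset.mul_sum]
    rw [Finset.sum_comm]
    exact Finset.sum_congr rfl fun _ _ => Finset.sum_congr rfl fun _ _ => by ring

theorem ChEquiv.trans [Fintype T] {W : X → Y → ℝ} {V : X → Z → ℝ} {U : X → T → ℝ}
    (hWV : ChEquiv W V) (hVU : ChEquiv V U) : ChEquiv W U :=
  ⟨hWV.1.trans hVU.1, hVU.2.trans hWV.2⟩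

theorem chEquiv_of_factorization [DecidableEq Z] {W : X → Y → ℝ} {V : X → Z → ℝ}
    (f : Y → Z) (g : Y → ℝ) (hg : ∀ y, 0 ≤ g y) (hg_fiber : ∀ z, ∑ y with f y = z, g y = 1)
    (hW : ∀ x y, W x y = g y * V x (f y)) : ChEquiv W V := by
  refine ⟨⟨fun z y => if f y = z then g y else 0, ⟨fun z y => ?_, fun z => ?_⟩, fun x y => ?_⟩,
    ⟨detKernel f, isChannel_detKernel f, fun x z => ?_⟩⟩
  · dsimp only
    split_ifs
    exacts [hg y, le_rfl]
  · rw [← Finset.sum_filter, hg_fiber]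
  · simp [hW, ite_mul]
  · simp_rw [detKernel, ite_mul, one_mul, zero_mul, ← Finset.sum_filter]
    rw [Finset.sum_congr rfl fun y hy => by rw [hW, (Finset.mem_filter.1 hy).2],
      ← Finset.sum_mul, hg_fiber, one_mul]

end Kernels

section Transforms

variable {Y Z : Type} [Fintype Y]

theorem sum_kernel_mul_kernel {X : Type} {Wd : X → Z → ℝ} {W : X → Y → ℝ} {P : Y → Z → ℝ}
    (hWP : ∀ x z, Wd x z = ∑ y, P y z * W x y) (c : ℝ) (a b : X) (z₁ z₂ : Z) :
    ∑ y₁, ∑ y₂, P y₁ z₁ * P y₂ z₂ * (c * W a y₁ * W b y₂) = c * Wd a z₁ * Wd b z₂ := by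
  rw [hWP, hWP, mul_assoc, Finset.sum_mul_sum, Finset.mul_sum]
  exact Finset.sum_congr rfl fun _ _ => by
    rw [Finset.mul_sum]; exact Finset.sum_congr rfl fun _ _ => by ring

variable [Fintype Z]

theorem Degraded.wminus {W : Fin 2 → Z → ℝ} {V : Fin 2 → Y → ℝ} (h : Degraded W V) :
    Degraded (Wminus W) (Wminus V) := by
  obtain ⟨P, hP, hWP⟩ := h
  refine ⟨fun y z => P y.1 z.1 * P y.2 z.2, hP.prod hP, fun u z => ?_⟩
  simp_rw [Wminus, Finset.mul_sum, Fintype.sum_prod_type, ← sum_kernel_mul_kernel hWP]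
  rw [Finset.sum_comm]
  exact Finset.sum_congr rfl fun _ _ => Finset.sum_comm

theorem Degraded.wplus {W : Fin 2 → Z → ℝ} {V : Fin 2 → Y → ℝ} (h : Degraded W V) :
    Degraded (Wplus W) (Wplus V) := by
  obtain ⟨P, hP, hWP⟩ := h
  refine ⟨fun y z => P y.1 z.1 * (P y.2.1 z.2.1 * detKernel id y.2.2 z.2.2),
    hP.prod (hP.prod (isChannel_detKernel id)), fun u z => ?_⟩
  simp only [Wplus, Fintype.sum_prod_type, detKernel, id, mul_ite, ite_mul, mul_one, mul_zero,
    zero_mul, Finset.sum_ite_eq', Finset.mem_univ, if_true]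
  rw [sum_kernel_mul_kernel hWP]

theorem ChEquiv.wminus {W : Fin 2 → Y → ℝ} {V : Fin 2 → Z → ℝ} (h : ChEquiv W V) :
    ChEquiv (Wminus W) (Wminus V) :=
  ⟨h.1.wminus, h.2.wminus⟩

theorem ChEquiv.wplus {W : Fin 2 → Y → ℝ} {V : Fin 2 → Z → ℝ} (h : ChEquiv W V) :
    ChEquiv (Wplus W) (Wplus V) :=
  ⟨h.1.wplus, h.2.wplus⟩

end Transforms

section Erasure

variable {ε : ℝ}

def becMinusMap (y : Option (Fin 2) × Option (Fin 2)) : Option (Fin 2) :=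
  Option.map₂ (· + ·) y.1 y.2

-- `W⁻ (y | x) / BEC (2ε - ε²) (becMinusMap y | x)`, the same for both inputs `x`.
noncomputable def becMinusPosterior (ε : ℝ) : Option (Fin 2) × Option (Fin 2) → ℝ
  | (some _, some _) => 1 / 2
  | (none, none) => ε / (2 - ε)
  | _ => (1 - ε) / (2 * (2 - ε))

theorem chEquiv_wminus_bec (h0 : 0 ≤ ε) (h1 : ε ≤ 1) :
    ChEquiv (Wminus (BEC ε)) (BEC (2 * ε - ε ^ 2)) := by
  have h2 : 2 - ε ≠ 0 := by linarith
  refine chEquiv_of_factorization becMinusMap (becMinusPosterior ε) ?_ ?_ ?_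
  · rintro ⟨_ | _, _ | _⟩ <;> simp only [becMinusPosterior] <;> apply div_nonneg <;> linarith
  · rintro (_ | z) <;> (try fin_cases z) <;>
      simp [Finset.sum_filter, Fintype.sum_prod_type, Fintype.sum_option, Fin.sum_univ_two,
        becMinusMap, becMinusPosterior] <;> field_simp <;> ring
  · rintro x ⟨_ | a, _ | b⟩ <;> (try fin_cases a) <;> (try fin_cases b) <;> fin_cases x <;>
      simp [Wminus, BEC, becMinusMap, becMinusPosterior, Fin.sum_univ_two] <;> field_simp <;> ring

-- Reads `u₂` off `y₂`, or else off `y₁ = u₁ + u₂` (in `Fin 2`, `a - u = a + u`).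
def becPlusMap (y : Option (Fin 2) × Option (Fin 2) × Fin 2) : Option (Fin 2) :=
  y.2.1.or (y.1.map (· + y.2.2))

-- `W⁺ (y | x) / BEC (ε²) (becPlusMap y | x)`; outputs with `a ≠ u + c` have probability zero.
noncomputable def becPlusPosterior (ε : ℝ) : Option (Fin 2) × Option (Fin 2) × Fin 2 → ℝ
  | (some a, some c, u) => if a = u + c then (1 - ε) / (2 * (1 + ε)) else 0
  | (none, none, _) => 1 / 2
  | _ => ε / (2 * (1 + ε))

theorem chEquiv_wplus_bec (h0 : 0 ≤ ε) (h1 : ε ≤ 1) :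
    ChEquiv (Wplus (BEC ε)) (BEC (ε ^ 2)) := by
  have h2 : 1 + ε ≠ 0 := by linarith
  refine chEquiv_of_factorization becPlusMap (becPlusPosterior ε) ?_ ?_ ?_
  · rintro ⟨_ | _, _ | _, _⟩ <;> simp only [becPlusPosterior] <;> try split_ifs
    all_goals first | rfl | apply div_nonneg <;> linarith
  · rintro (_ | z) <;> (try fin_cases z) <;>
      simp [Finset.sum_filter, Fintype.sum_prod_type, Fintype.sum_option, Fin.sum_univ_two,
        becPlusMap, becPlusPosterior] <;> field_simp <;> ring
  · rintro x ⟨_ | a, _ | c, u⟩ <;> (try fin_cases a) <;> (try fin_cases c) <;> fin_cases u <;>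
      fin_cases x <;> simp [Wplus, BEC, becPlusMap, becPlusPosterior] <;> field_simp <;> ring

theorem becIter_mem_Icc (h0 : 0 ≤ ε) (h1 : ε ≤ 1) (bs : List Bool) :
    becIter ε bs ∈ Set.Icc 0 1 := by
  induction bs with
  | nil => exact ⟨h0, h1⟩
  | cons b bs ih =>
    obtain ⟨hl, hr⟩ := ih
    cases b <;> simp only [becIter] <;> constructor <;> nlinarith

end Erasure

theorem bec_polarization (ε : ℝ) (h0 : 0 ≤ ε) (h1 : ε ≤ 1) :
    ChEquiv (Wminus (BEC ε)) (BEC (2 * ε - ε ^ 2)) ∧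
      ChEquiv (Wplus (BEC ε)) (BEC (ε ^ 2)) ∧
      ∀ bs : List Bool, ChEquiv (bitChannel (BEC ε) bs) (BEC (becIter ε bs)) := by
  refine ⟨chEquiv_wminus_bec h0 h1, chEquiv_wplus_bec h0 h1, fun bs => ?_⟩
  induction bs with
  | nil => exact .refl _
  | cons b bs ih =>
    obtain ⟨hl, hr⟩ := becIter_mem_Icc h0 h1 bs
    cases b
    · exact ih.wminus.trans (chEquiv_wminus_bec hl hr)
    · exact ih.wplus.trans (chEquiv_wplus_bec hl hr)
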